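/- Let n, ℓ ∈ ℕ⁺. There exists an absolute constant c and a fully connected ReLU network φ of input dimension 1, output dimension 2, width at most c·3^n, depth at most c·⌈ℓ/n⌉, and weights bounded in absolute value by 3^{cn}, such that for any binary digits θ_1, θ_2, … ∈ {0,1}, φ(Σ_{k=1}^∞ θ_k 3^{-k}) = (Σ_{j=1}^ℓ θ_j 2^{-j}, Σ_{k=1}^∞ θ_{ℓ+k} 3^{-k}). -/

import Mathlib

open Set Filter MeasureTheory ProbabilityTheory
open scoped ENNReal NNReal BigOperators

noncomputable section

namespace DeepRelu

/-! ### Fully connected ReLU networks -/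

/-- Forward pass (pre-activation of the last layer) of a fully connected ReLU network,
realized on `ℕ → ℝ` with widths recorded in `widths`. -/
def forward (widths : ℕ → ℕ) (W : ℕ → ℕ → ℕ → ℝ) (v : ℕ → ℕ → ℝ) :
    ℕ → (ℕ → ℝ) → ℕ → ℝ
  | 0, x, j => ∑ k ∈ Finset.range (widths 0), W 0 j k * x k
  | i + 1, x, j => ∑ k ∈ Finset.range (widths (i + 1)),
      W (i + 1) j k * max (forward widths W v i x k + v i k) 0

/-- `IsReLUNet D dout width depth bound f` : the function `f : ℝ^D → ℝ^dout` is realized by a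
fully connected ReLU network of depth at most `depth`, all widths at most `width`, and all
weight and bias entries bounded in absolute value by `bound`. -/
def IsReLUNet (D dout : ℕ) (width depth bound : ℝ)
    (f : (Fin D → ℝ) → Fin dout → ℝ) : Prop :=
  ∃ (L : ℕ) (widths : ℕ → ℕ) (W : ℕ → ℕ → ℕ → ℝ) (v : ℕ → ℕ → ℝ),
    (L : ℝ) ≤ depth ∧ widths 0 = D ∧ widths (L + 1) = dout ∧
    (∀ i, i ≤ L + 1 → (widths i : ℝ) ≤ width) ∧
    (∀ i j k, i ≤ L → j < widths (i + 1) → k < widths i → |W i j k| ≤ bound) ∧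
    (∀ i j, i ≤ L → j < widths (i + 1) → |v i j| ≤ bound) ∧
    ∀ (x : Fin D → ℝ) (j : Fin dout),
      f x j = forward widths W v L (fun k => if h : k < D then x ⟨k, h⟩ else 0) j + v L j

/-- The class of functions realized by fully connected ReLU networks. -/
def ReLUNetClass (D dout : ℕ) (width depth bound : ℝ) :
    Set ((Fin D → ℝ) → Fin dout → ℝ) :=
  {f | IsReLUNet D dout width depth bound f}

/-! ### Covering numbers and Minkowski dimension -/

/-- `ε`-covering number of a set `Θ` with respect to a distance function `d`. -/
def coveringNumber {α : Type*} (d : α → α → ℝ) (ε : ℝ) (Θ : Set α) : ℝ≥0∞ :=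
  sInf {n : ℝ≥0∞ | ∃ t : Finset α, (t.card : ℝ≥0∞) = n ∧ ∀ x ∈ Θ, ∃ y ∈ t, d x y ≤ ε}

/-- Uniform distance between two real-valued functions over a set `K`. -/
def unifDist {β : Type*} (K : Set β) (f g : β → ℝ) : ℝ :=
  ⨆ x : K, |f x.1 - g x.1|

/-- (Upper) Minkowski dimension with respect to the sup-norm. -/
def minkowskiDim {ι : Type*} [Fintype ι] (M : Set (ι → ℝ)) : ℝ :=
  limsup (fun ε : ℝ =>
      Real.log ((coveringNumber (fun x y => dist x y) ε M).toReal) / Real.log (1 / ε))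
    (nhdsWithin 0 (Ioi 0))

/-- `δ`-enlargement of a set in the sup-norm. -/
def enlarge {β : Type*} [PseudoEMetricSpace β] (A : Set β) (δ : ℝ) : Set β :=
  {x | EMetric.infEdist x A ≤ ENNReal.ofReal δ}

/-- The unit cube `[0,1]^D`. -/
def unitCube (D : ℕ) : Set (Fin D → ℝ) := Set.Icc 0 1

/-! ### Hölder classes -/

section Holder

variable {ι : Type*} [Fintype ι] [DecidableEq ι]

/-- Partial derivative in the `j`-th coordinate. -/
def pderiv (j : ι) (f : (ι → ℝ) → ℝ) : (ι → ℝ) → ℝ :=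
  fun x => fderiv ℝ f x (Pi.single j 1)

/-- Iterated partial derivative in the `j`-th coordinate. -/
def iterPDeriv (j : ι) : ℕ → ((ι → ℝ) → ℝ) → ((ι → ℝ) → ℝ)
  | 0 => id
  | n + 1 => fun f => pderiv j (iterPDeriv j n f)

/-- Multi-index partial derivative `∂^α f`. -/
def multiDeriv (α : ι → ℕ) (f : (ι → ℝ) → ℝ) : (ι → ℝ) → ℝ :=
  (Finset.univ : Finset ι).toList.foldr (fun j g => iterPDeriv j (α j) g) f

/-- Order `|α|` of a multi-index. -/
def mdeg (α : ι → ℕ) : ℕ := ∑ j, α j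

/-- The Hölder norm of `f` on `K`. -/
def holderNorm (s : ℝ) (K : Set (ι → ℝ)) (f : (ι → ℝ) → ℝ) : ℝ :=
  (∑ α ∈ Finset.filter (fun α => mdeg α < ⌊s⌋₊)
      (Fintype.piFinset fun _ : ι => Finset.range (⌊s⌋₊ + 1)),
    ⨆ x : K, |multiDeriv α f x.1|) +
  ∑ α ∈ Finset.filter (fun α => mdeg α = ⌊s⌋₊)
      (Fintype.piFinset fun _ : ι => Finset.range (⌊s⌋₊ + 1)),
    ⨆ p : {p : (ι → ℝ) × (ι → ℝ) // p.1 ∈ K ∧ p.2 ∈ K ∧ p.1 ≠ p.2},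
      |multiDeriv α f p.1.1 - multiDeriv α f p.1.2| / dist p.1.1 p.1.2 ^ (s - (⌊s⌋₊ : ℝ))

/-- Membership in the Hölder class `H_s(K, C)`. -/
def MemHolder (s C : ℝ) (K : Set (ι → ℝ)) (f : (ι → ℝ) → ℝ) : Prop :=
  ContDiff ℝ (⌊s⌋₊ : ℕ∞) f ∧ holderNorm s K f ≤ C

end Holder

/-! ### Compositional models -/

/-- `compUpTo Dv g i = g_{i-1} ∘ ⋯ ∘ g_0` (and the identity for `i = 0`). -/
def compUpTo (Dv : ℕ → ℕ)
    (g : (i : ℕ) → (Fin (Dv i) → ℝ) → (Fin (Dv (i + 1)) → ℝ)) :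
    (i : ℕ) → (Fin (Dv 0) → ℝ) → (Fin (Dv i) → ℝ)
  | 0 => id
  | i + 1 => fun x => g i (compUpTo Dv g i x)

/-- Assemble full layer maps from component functions acting on coordinate subsets. -/
def assemble (Dv : ℕ → ℕ) (S : (i : ℕ) → Fin (Dv (i + 1)) → Finset (Fin (Dv i)))
    (gc : (i : ℕ) → (j : Fin (Dv (i + 1))) → (↥(S i j) → ℝ) → ℝ) :
    (i : ℕ) → (Fin (Dv i) → ℝ) → (Fin (Dv (i + 1)) → ℝ) :=
  fun i x j => gc i j fun k => x k.1

/-- Accumulated sup-norm error `δ_i` between partial compositions over `M` (`δ_0 = 0`). -/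
def accErr (Dv : ℕ → ℕ)
    (h h' : (i : ℕ) → (Fin (Dv i) → ℝ) → (Fin (Dv (i + 1)) → ℝ))
    (M : Set (Fin (Dv 0) → ℝ)) : ℕ → ℝ
  | 0 => 0
  | i + 1 => ⨆ x : M, dist (compUpTo Dv h (i + 2) x.1) (compUpTo Dv h' (i + 2) x.1)

/-! ### Median smoothing -/

/-- Median of three real numbers. -/
def mid (a b c : ℝ) : ℝ := max (min a b) (min (max a b) c)

/-- Coordinatewise median smoothing `M_{g,i}` at scale `δ`. -/
def medSmooth {D : ℕ} (δ : ℝ) (g : (Fin D → ℝ) → ℝ) : ℕ → (Fin D → ℝ) → ℝ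
  | 0 => g
  | i + 1 => fun x =>
      if h : i < D then
        mid (medSmooth δ g i fun k => x k - if k = ⟨i, h⟩ then δ else 0)
            (medSmooth δ g i x)
            (medSmooth δ g i fun k => x k + if k = ⟨i, h⟩ then δ else 0)
      else medSmooth δ g i x

/-- Modulus of continuity of `f` on the unit cube. -/
def modCont {D : ℕ} (f : (Fin D → ℝ) → ℝ) (δ : ℝ) : ℝ :=
  ⨆ p : {p : (Fin D → ℝ) × (Fin D → ℝ) //
      p.1 ∈ unitCube D ∧ p.2 ∈ unitCube D ∧ dist p.1 p.2 ≤ δ},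
    |f p.1.1 - f p.1.2|

/-- Grid cube `Q_β` of side length `1/K`. -/
def Qcube {D : ℕ} (K : ℕ) (β : Fin D → ℕ) : Set (Fin D → ℝ) :=
  univ.pi fun i => Icc ((β i : ℝ) / K) (((β i : ℝ) + 1) / K)

/-- The set `Ω_{K,δ}` of points close to interior grid hyperplanes. -/
def badset (D K : ℕ) (δ : ℝ) : Set (Fin D → ℝ) :=
  ⋃ j : Fin D, {x ∈ unitCube D |
    ∃ k : ℕ, 1 ≤ k ∧ k ≤ K - 1 ∧ x j ∈ Ioo ((k : ℝ) / K - δ) ((k : ℝ) / K)}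

/-!
Write the input as `x = ∑ θ_k 3^{-(k+1)}` and decode the first `ℓ` digits in `⌈ℓ/n⌉` blocks
of at most `n` digits, one hidden layer per block. Before a block of length `m`, the layer
carries the binary sum `S` of the digits decoded so far, the ternary tail `T` of the remaining
digits, and copies of `4 · 3^m T`. Because the digits are `0` or `1`, `3^m T = W + ρ` with
`W ∈ ℕ` the block read in base 3 and `0 ≤ ρ ≤ 1/2`, so the `3^m` ramp differences
`relu (4 · 3^m T - 4t - 2) - relu (4 · 3^m T - 4t - 3)` are exactly the indicators of `t < W`.
Summing them gives `W`, whence the new tail `3^m T - W`; summing them against the increments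
of `w ↦ (base-3 digits of w read in base 2)` telescopes to the binary value of the block,
which is added to `S`. The widths are `O(3^n)` and the weights `O(9^n)`.
-/

lemma IsReLUNet.mono {D dout : ℕ} {width depth bound width' depth' bound' : ℝ}
    {f : (Fin D → ℝ) → Fin dout → ℝ} (hf : IsReLUNet D dout width depth bound f)
    (hw : width ≤ width') (hd : depth ≤ depth') (hb : bound ≤ bound') :
    IsReLUNet D dout width' depth' bound' f := by
  obtain ⟨L, ws, W, v, hL, h0, hout, hws, hW, hv, hf⟩ := hf
  exact ⟨L, ws, W, v, hL.trans hd, h0, hout, fun i hi => (hws i hi).trans hw,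
    fun i j k hi hj hk => (hW i j k hi hj hk).trans hb,
    fun i j hi hj => (hv i j hi hj).trans hb, hf⟩

namespace BitDecoder

open Finset

variable {θ : ℕ → ℕ}

def ternaryTail (θ : ℕ → ℕ) (a : ℕ) : ℝ := ∑' k, (θ (a + k) : ℝ) / 3 ^ (k + 1)

def ternaryPrefix (θ : ℕ → ℕ) (a : ℕ) : ℕ → ℕ
  | 0 => 0
  | m + 1 => 3 * ternaryPrefix θ a m + θ (a + m)

def binarySum (θ : ℕ → ℕ) (a : ℕ) : ℝ := ∑ j ∈ range a, (θ j : ℝ) / 2 ^ (j + 1)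

lemma ternaryTail_nonneg (a : ℕ) : 0 ≤ ternaryTail θ a :=
  tsum_nonneg fun _ => by positivity

lemma binarySum_nonneg (a : ℕ) : 0 ≤ binarySum θ a :=
  sum_nonneg fun _ _ => by positivity

lemma ternaryTail_term_le (hθ : ∀ k, θ k ≤ 1) (a k : ℕ) :
    (θ (a + k) : ℝ) / 3 ^ (k + 1) ≤ 1 / 3 * (1 / 3) ^ k := by
  have : (θ (a + k) : ℝ) ≤ 1 := by exact_mod_cast hθ (a + k)
  rw [← pow_succ', one_div_pow]
  gcongr

lemma summable_ternaryTail (hθ : ∀ k, θ k ≤ 1) (a : ℕ) :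
    Summable fun k => (θ (a + k) : ℝ) / 3 ^ (k + 1) :=
  .of_nonneg_of_le (fun _ => by positivity) (ternaryTail_term_le hθ a)
    ((summable_geometric_of_lt_one (by norm_num) (by norm_num)).mul_left _)

lemma ternaryTail_le_half (hθ : ∀ k, θ k ≤ 1) (a : ℕ) : ternaryTail θ a ≤ 1 / 2 := by
  calc ternaryTail θ a ≤ ∑' k : ℕ, 1 / 3 * (1 / 3 : ℝ) ^ k :=
        (summable_ternaryTail hθ a).tsum_le_tsum (ternaryTail_term_le hθ a)
          ((summable_geometric_of_lt_one (by norm_num) (by norm_num)).mul_left _)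
    _ = 1 / 2 := by
        rw [tsum_mul_left, tsum_geometric_of_lt_one (by norm_num) (by norm_num)]
        norm_num

lemma three_mul_ternaryTail (hθ : ∀ k, θ k ≤ 1) (a : ℕ) :
    3 * ternaryTail θ a = θ a + ternaryTail θ (a + 1) := by
  rw [ternaryTail, (summable_ternaryTail hθ a).tsum_eq_zero_add, mul_add, ternaryTail,
    ← tsum_mul_left]
  congr 1
  · simp only [add_zero, zero_add, pow_one]
    field_simp
  · refine tsum_congr fun k => ?_
    rw [pow_succ _ (k + 1), show a + (k + 1) = a + 1 + k by ring]
    field_simp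

lemma three_pow_mul_ternaryTail (hθ : ∀ k, θ k ≤ 1) (a m : ℕ) :
    3 ^ m * ternaryTail θ a = ternaryPrefix θ a m + ternaryTail θ (a + m) := by
  induction m with
  | zero => simp [ternaryPrefix]
  | succ m ih =>
    rw [pow_succ', mul_assoc, ih, mul_add, three_mul_ternaryTail hθ, ternaryPrefix]
    push_cast
    ring_nf

lemma two_mul_ternaryPrefix_lt (hθ : ∀ k, θ k ≤ 1) (a m : ℕ) :
    2 * ternaryPrefix θ a m < 3 ^ m := by
  induction m with
  | zero => simp [ternaryPrefix]
  | succ m ih =>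
    have := hθ (a + m)
    rw [ternaryPrefix, pow_succ]
    omega

def ternaryToBinary : ℕ → ℕ → ℝ
  | 0, _ => 0
  | m + 1, w => ternaryToBinary m (w / 3) + (w % 3 : ℕ) / 2 ^ (m + 1)

lemma ternaryToBinary_zero_right (m : ℕ) : ternaryToBinary m 0 = 0 := by
  induction m with
  | zero => rfl
  | succ m ih => simp [ternaryToBinary, ih]

lemma ternaryToBinary_nonneg (m w : ℕ) : 0 ≤ ternaryToBinary m w := by
  induction m generalizing w with
  | zero => rfl
  | succ m ih => exact add_nonneg (ih _) (by positivity)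

lemma ternaryToBinary_le_two (m w : ℕ) : ternaryToBinary m w ≤ 2 := by
  suffices ∀ w, ternaryToBinary m w + 2 / 2 ^ m ≤ 2 from
    le_of_add_le_of_nonneg_left (this w) (by positivity)
  induction m with
  | zero => intro w; norm_num [ternaryToBinary]
  | succ m ih =>
    intro w
    have hdigit : ((w % 3 : ℕ) : ℝ) ≤ 2 := by
      exact_mod_cast Nat.lt_succ_iff.mp (w.mod_lt three_pos)
    calc ternaryToBinary (m + 1) w + 2 / 2 ^ (m + 1)
        ≤ ternaryToBinary m (w / 3) + 2 / 2 ^ (m + 1) + 2 / 2 ^ (m + 1) := by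
          rw [ternaryToBinary]; gcongr
      _ = ternaryToBinary m (w / 3) + 2 / 2 ^ m := by rw [pow_succ]; ring
      _ ≤ 2 := ih (w / 3)

lemma ternaryToBinary_ternaryPrefix (hθ : ∀ k, θ k < 3) (a m : ℕ) :
    ternaryToBinary m (ternaryPrefix θ a m)
      = ∑ j ∈ range m, (θ (a + j) : ℝ) / 2 ^ (j + 1) := by
  induction m with
  | zero => rfl
  | succ m ih =>
    have hdiv : ternaryPrefix θ a (m + 1) / 3 = ternaryPrefix θ a m := by
      have := hθ (a + m); rw [ternaryPrefix]; omega
    have hmod : ternaryPrefix θ a (m + 1) % 3 = θ (a + m) := by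
      have := hθ (a + m); rw [ternaryPrefix]; omega
    rw [ternaryToBinary, hdiv, hmod, ih, sum_range_succ]

lemma binarySum_add (hθ : ∀ k, θ k ≤ 1) (a m : ℕ) :
    binarySum θ (a + m) = binarySum θ a + ternaryToBinary m (ternaryPrefix θ a m) / 2 ^ a := by
  rw [ternaryToBinary_ternaryPrefix (fun k => (hθ k).trans_lt (by norm_num)), binarySum,
    binarySum, sum_range_add, sum_div]
  congr 1
  refine sum_congr rfl fun j _ => ?_
  ring

lemma relu_sub_relu_eq_ite {y ρ : ℝ} {W : ℕ} (hy : y = W + ρ) (hρ₀ : 0 ≤ ρ)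
    (hρ : ρ ≤ 1 / 2) (t : ℕ) :
    max (4 * y - (4 * t + 2)) 0 - max (4 * y - (4 * t + 3)) 0 = if t < W then 1 else 0 := by
  split_ifs with h
  · have : (t : ℝ) + 1 ≤ W := by exact_mod_cast h
    rw [max_eq_left (by linarith), max_eq_left (by linarith)]
    ring
  · have : (W : ℝ) ≤ t := by exact_mod_cast not_lt.mp h
    rw [max_eq_right (by linarith), max_eq_right (by linarith)]
    ring

lemma sum_ite_lt_mul_sub {W M : ℕ} (h : W ≤ M) (g : ℕ → ℝ) :
    ∑ t ∈ range M, (if t < W then 1 else 0) * (g (t + 1) - g t) = g W - g 0 := by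
  obtain ⟨M, rfl⟩ := Nat.exists_eq_add_of_le h
  rw [sum_range_add, ← sum_range_sub,
    sum_eq_zero (s := range M) fun t _ => by rw [if_neg (by omega), zero_mul], add_zero]
  exact sum_congr rfl fun t ht => by rw [if_pos (mem_range.mp ht), one_mul]

-- Weights on a hidden layer whose neurons `2 + 2t` and `3 + 2t` form the `t`-th ramp pair.
def pairRow (c₀ c₁ : ℝ) (d : ℕ → ℝ) (k : ℕ) : ℝ :=
  if k = 0 then c₀ else if k = 1 then c₁
  else if k % 2 = 0 then d ((k - 2) / 2) else -d ((k - 2) / 2)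

lemma sum_pairRow_mul (c₀ c₁ : ℝ) (d σ : ℕ → ℝ) (M : ℕ) :
    ∑ k ∈ range (2 + 2 * M), pairRow c₀ c₁ d k * σ k
      = c₀ * σ 0 + c₁ * σ 1 + ∑ t ∈ range M, d t * (σ (2 + 2 * t) - σ (3 + 2 * t)) := by
  induction M with
  | zero => simp [sum_range_succ, pairRow]
  | succ M ih =>
    have h₂ : pairRow c₀ c₁ d (2 + 2 * M) = d M := by
      rw [pairRow, if_neg (by omega), if_neg (by omega), if_pos (by omega),
        show (2 + 2 * M - 2) / 2 = M by omega]
    have h₃ : pairRow c₀ c₁ d (3 + 2 * M) = -d M := by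
      rw [pairRow, if_neg (by omega), if_neg (by omega), if_neg (by omega),
        show (3 + 2 * M - 2) / 2 = M by omega]
    rw [show 2 + 2 * (M + 1) = 2 + 2 * M + 1 + 1 by ring, sum_range_succ, sum_range_succ, ih,
      sum_range_succ, h₂, show 2 + 2 * M + 1 = 3 + 2 * M by ring, h₃]
    ring

lemma abs_pairRow_le {c₀ c₁ C : ℝ} {d : ℕ → ℝ} (h₀ : |c₀| ≤ C) (h₁ : |c₁| ≤ C)
    (hd : ∀ t, |d t| ≤ C) (k : ℕ) : |pairRow c₀ c₁ d k| ≤ C := by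
  unfold pairRow
  split_ifs
  · exact h₀
  · exact h₁
  · exact hd _
  · rw [abs_neg]; exact hd _

def binaryRow (a m : ℕ) : ℕ → ℝ :=
  pairRow 1 0 fun t => (ternaryToBinary m (t + 1) - ternaryToBinary m t) / 2 ^ a

def ternaryRow (m : ℕ) : ℕ → ℝ := pairRow 0 (3 ^ m) fun _ => -1

lemma sum_binaryRow_mul {a m W : ℕ} (hW : W ≤ 3 ^ m) {σ : ℕ → ℝ}
    (hσ : ∀ t, σ (2 + 2 * t) - σ (3 + 2 * t) = if t < W then 1 else 0) :
    ∑ k ∈ range (2 + 2 * 3 ^ m), binaryRow a m k * σ k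
      = σ 0 + ternaryToBinary m W / 2 ^ a := by
  have hsum : ∑ t ∈ range (3 ^ m), (ternaryToBinary m (t + 1) - ternaryToBinary m t) / 2 ^ a
      * (σ (2 + 2 * t) - σ (3 + 2 * t)) = ternaryToBinary m W / 2 ^ a := by
    rw [← sub_zero (ternaryToBinary m W), ← ternaryToBinary_zero_right m,
      ← sum_ite_lt_mul_sub hW, sum_div]
    exact sum_congr rfl fun t _ => by rw [hσ]; ring
  rw [binaryRow, sum_pairRow_mul, hsum]
  ring

lemma sum_ternaryRow_mul {m W : ℕ} (hW : W ≤ 3 ^ m) {σ : ℕ → ℝ}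
    (hσ : ∀ t, σ (2 + 2 * t) - σ (3 + 2 * t) = if t < W then 1 else 0) :
    ∑ k ∈ range (2 + 2 * 3 ^ m), ternaryRow m k * σ k = 3 ^ m * σ 1 - W := by
  have hcount : ∑ t ∈ range (3 ^ m), (σ (2 + 2 * t) - σ (3 + 2 * t)) = W := by
    simpa [hσ] using sum_ite_lt_mul_sub hW (fun t => (t : ℝ))
  rw [ternaryRow, sum_pairRow_mul, ← mul_sum, hcount]
  ring

lemma abs_binaryRow_le (a m k : ℕ) : |binaryRow a m k| ≤ 2 := by
  refine abs_pairRow_le (by norm_num) (by norm_num) (fun t => ?_) k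
  rw [abs_div, abs_of_pos (by positivity : (0 : ℝ) < 2 ^ a)]
  refine (div_le_self (abs_nonneg _) (one_le_pow₀ (by norm_num))).trans
    (abs_sub_le_iff.mpr ⟨?_, ?_⟩)
  all_goals linarith [ternaryToBinary_nonneg m t, ternaryToBinary_le_two m t,
    ternaryToBinary_nonneg m (t + 1), ternaryToBinary_le_two m (t + 1)]

lemma abs_ternaryRow_le (m k : ℕ) : |ternaryRow m k| ≤ 3 ^ m :=
  abs_pairRow_le (by simp) (by simp) (fun _ => by simpa using one_le_pow₀ (by norm_num)) k

def stateVec (m : ℕ) (S T : ℝ) (j : ℕ) : ℝ :=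
  if j = 0 then S else if j = 1 then T else 4 * 3 ^ m * T

-- Thresholds `4t + 2` and `4t + 3` on the ramp pair `2 + 2t`, `3 + 2t`.
def blockBias (k : ℕ) : ℝ := if k ≤ 1 then 0 else -((2 * k - 2 - k % 2 : ℕ) : ℝ)

lemma stateVec_of_two_le (m : ℕ) (S T : ℝ) {j : ℕ} (hj : 2 ≤ j) :
    stateVec m S T j = 4 * 3 ^ m * T := by
  rw [stateVec, if_neg (by omega), if_neg (by omega)]

lemma blockBias_two_add_two_mul (t : ℕ) : blockBias (2 + 2 * t) = -(4 * t + 2) := by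
  rw [blockBias, if_neg (by omega), show 2 * (2 + 2 * t) - 2 - (2 + 2 * t) % 2 = 4 * t + 2 by omega]
  push_cast; ring

lemma blockBias_three_add_two_mul (t : ℕ) : blockBias (3 + 2 * t) = -(4 * t + 3) := by
  rw [blockBias, if_neg (by omega), show 2 * (3 + 2 * t) - 2 - (3 + 2 * t) % 2 = 4 * t + 3 by omega]
  push_cast; ring

def blockWeights (m' a m : ℕ) (j k : ℕ) : ℝ :=
  stateVec m' (binaryRow a m k) (ternaryRow m k) j

lemma sum_stateVec_mul (m : ℕ) (s : Finset ℕ) (r₀ r₁ σ : ℕ → ℝ) (j : ℕ) :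
    ∑ k ∈ s, stateVec m (r₀ k) (r₁ k) j * σ k
      = stateVec m (∑ k ∈ s, r₀ k * σ k) (∑ k ∈ s, r₁ k * σ k) j := by
  unfold stateVec
  split_ifs <;> simp only [mul_sum, mul_assoc]

lemma abs_stateVec_le {S T C : ℝ} (hS : |S| ≤ C) (hT : |T| ≤ C) (m j : ℕ) :
    |stateVec m S T j| ≤ 4 * 3 ^ m * C := by
  have hC : C ≤ 4 * 3 ^ m * C := le_mul_of_one_le_left ((abs_nonneg S).trans hS)
    (by nlinarith [one_le_pow₀ (M₀ := ℝ) (a := 3) (n := m) (by norm_num)])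
  unfold stateVec
  split_ifs
  · exact hS.trans hC
  · exact hT.trans hC
  · rw [abs_mul, abs_of_pos (by positivity)]
    gcongr

lemma abs_blockBias_le (k : ℕ) : |blockBias k| ≤ 2 * k := by
  unfold blockBias
  split_ifs
  · simp
  · rw [abs_neg, Nat.abs_cast]
    exact_mod_cast (show 2 * k - 2 - k % 2 ≤ 2 * k by omega)

lemma sum_blockWeights_mul_relu (hθ : ∀ k, θ k ≤ 1) (m' a m j : ℕ) :
    ∑ k ∈ range (2 + 2 * 3 ^ m), blockWeights m' a m j k
        * max (stateVec m (binarySum θ a) (ternaryTail θ a) k + blockBias k) 0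
      = stateVec m' (binarySum θ (a + m)) (ternaryTail θ (a + m)) j := by
  set σ := fun k => max (stateVec m (binarySum θ a) (ternaryTail θ a) k + blockBias k) 0
  have hσ₀ : σ 0 = binarySum θ a := by simp [σ, stateVec, blockBias, binarySum_nonneg]
  have hσ₁ : σ 1 = ternaryTail θ a := by simp [σ, stateVec, blockBias, ternaryTail_nonneg]
  have hsplit := three_pow_mul_ternaryTail hθ a m
  have hstair (t : ℕ) :
      σ (2 + 2 * t) - σ (3 + 2 * t) = if t < ternaryPrefix θ a m then 1 else 0 := by
    rw [← relu_sub_relu_eq_ite hsplit (ternaryTail_nonneg _) (ternaryTail_le_half hθ _) t]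
    simp only [σ, stateVec_of_two_le _ _ _ (show 2 ≤ 2 + 2 * t by omega),
      stateVec_of_two_le _ _ _ (show 2 ≤ 3 + 2 * t by omega), blockBias_two_add_two_mul,
      blockBias_three_add_two_mul, mul_assoc, sub_eq_add_neg]
  have hW : ternaryPrefix θ a m ≤ 3 ^ m := by
    have := two_mul_ternaryPrefix_lt hθ a m
    omega
  simp only [blockWeights]
  rw [sum_stateVec_mul, sum_binaryRow_mul hW hstair, sum_ternaryRow_mul hW hstair,
    hσ₀, hσ₁, hsplit, binarySum_add hθ]
  congr 1
  ring

section Network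

variable (n ℓ : ℕ)

def depth : ℕ := ⌈(ℓ : ℝ) / n⌉₊

def offset (b : ℕ) : ℕ := min ℓ (n * b)

def blockLen (b : ℕ) : ℕ := offset n ℓ (b + 1) - offset n ℓ b

def widths : ℕ → ℕ
  | 0 => 1
  | b + 1 => if b < depth n ℓ then 2 + 2 * 3 ^ blockLen n ℓ b else 2

def weights : ℕ → ℕ → ℕ → ℝ
  | 0, j, _ => stateVec (blockLen n ℓ 0) 0 1 j
  | b + 1, j, k => blockWeights (blockLen n ℓ (b + 1)) (offset n ℓ b) (blockLen n ℓ b) j k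

def biases (i k : ℕ) : ℝ := if i < depth n ℓ then blockBias k else 0

def decoder (x : Fin 1 → ℝ) (j : Fin 2) : ℝ :=
  forward (widths n ℓ) (weights n ℓ) (biases n ℓ) (depth n ℓ)
    (fun k => if h : k < 1 then x ⟨k, h⟩ else 0) j + biases n ℓ (depth n ℓ) j

variable {n ℓ}

lemma offset_succ (b : ℕ) : offset n ℓ (b + 1) = offset n ℓ b + blockLen n ℓ b := by
  unfold blockLen offset
  rw [mul_add_one]
  omega

lemma blockLen_le (b : ℕ) : blockLen n ℓ b ≤ n := by
  unfold blockLen offset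
  rw [mul_add_one]
  omega

lemma offset_depth (hn : 0 < n) : offset n ℓ (depth n ℓ) = ℓ := by
  have h : (ℓ : ℝ) / n ≤ depth n ℓ := Nat.le_ceil _
  rw [div_le_iff₀ (by positivity), ← Nat.cast_mul, Nat.cast_le, mul_comm] at h
  exact min_eq_left h

lemma forward_eq_stateVec (hθ : ∀ k, θ k ≤ 1) {x : ℕ → ℝ} (hx : x 0 = ternaryTail θ 0) :
    ∀ b ≤ depth n ℓ, forward (widths n ℓ) (weights n ℓ) (biases n ℓ) b x
      = stateVec (blockLen n ℓ b) (binarySum θ (offset n ℓ b))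
          (ternaryTail θ (offset n ℓ b)) := by
  intro b
  induction b with
  | zero =>
    intro _
    funext j
    simp [forward, widths, weights, offset, binarySum, stateVec, hx]
  | succ b ih =>
    intro (hb : b < depth n ℓ)
    funext j
    rw [forward, widths, if_pos hb, ih hb.le, offset_succ]
    simp only [weights, biases, if_pos hb]
    exact sum_blockWeights_mul_relu hθ _ _ _ _

lemma decoder_apply (hn : 0 < n) (hθ : ∀ k, θ k ≤ 1) :
    decoder n ℓ (fun _ => ternaryTail θ 0) 0 = binarySum θ ℓ ∧
      decoder n ℓ (fun _ => ternaryTail θ 0) 1 = ternaryTail θ ℓ := by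
  have h := forward_eq_stateVec (n := n) (ℓ := ℓ) hθ
    (x := fun k => if _ : k < 1 then ternaryTail θ 0 else 0) rfl _ le_rfl
  rw [offset_depth hn] at h
  unfold decoder
  rw [h]
  simp [biases, stateVec]

lemma widths_le (i : ℕ) : widths n ℓ i ≤ 2 + 2 * 3 ^ n := by
  cases i with
  | zero => simp only [widths]; omega
  | succ b =>
    have := Nat.pow_le_pow_right (show 0 < 3 by norm_num) (blockLen_le (n := n) (ℓ := ℓ) b)
    simp only [widths]
    split_ifs <;> omega

lemma abs_weights_le (i j k : ℕ) : |weights n ℓ i j k| ≤ 8 * 9 ^ n := by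
  have h3 : (1 : ℝ) ≤ 3 ^ n := one_le_pow₀ (by norm_num)
  have hblk (b : ℕ) : (3 : ℝ) ^ blockLen n ℓ b ≤ 3 ^ n :=
    pow_le_pow_right₀ (by norm_num) (blockLen_le b)
  have h9 : (8 : ℝ) * 9 ^ n = 4 * 3 ^ n * (2 * 3 ^ n) := by
    rw [show (9 : ℝ) = 3 * 3 by norm_num, mul_pow]; ring
  rw [h9]
  cases i with
  | zero =>
    refine (abs_stateVec_le (C := 2 * 3 ^ n) (by simp) (by simp; linarith) _ j).trans ?_
    gcongr 4 * ?_ * _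
    exact hblk 0
  | succ b =>
    refine (abs_stateVec_le (C := 2 * 3 ^ n) ((abs_binaryRow_le _ _ k).trans (by linarith))
      ((abs_ternaryRow_le _ k).trans (by linarith [hblk b])) _ j).trans ?_
    gcongr 4 * ?_ * _
    exact hblk (b + 1)

lemma abs_biases_le {i j : ℕ} (hj : j < widths n ℓ (i + 1)) :
    |biases n ℓ i j| ≤ 8 * 9 ^ n := by
  have hw := widths_le (n := n) (ℓ := ℓ) (i + 1)
  have h1 : (1 : ℝ) ≤ 3 ^ n := one_le_pow₀ (by norm_num)
  have h9 : (3 : ℝ) ^ n ≤ 9 ^ n := pow_le_pow_left₀ (by norm_num) (by norm_num) n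
  unfold biases
  split_ifs
  · refine (abs_blockBias_le j).trans ?_
    have : (j : ℝ) + 1 ≤ 2 + 2 * 3 ^ n := by
      exact_mod_cast (show j + 1 ≤ 2 + 2 * 3 ^ n by omega)
    linarith
  · simp only [abs_zero]; positivity

end Network

lemma isReLUNet_decoder (n ℓ : ℕ) :
    IsReLUNet 1 2 (2 + 2 * 3 ^ n) (depth n ℓ) (8 * 9 ^ n) (decoder n ℓ) := by
  refine ⟨depth n ℓ, widths n ℓ, weights n ℓ, biases n ℓ, le_rfl, rfl, ?_,
    fun i _ => by exact_mod_cast widths_le i, fun i j k _ _ _ => abs_weights_le i j k,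
    fun i j _ hj => abs_biases_le hj, fun x j => rfl⟩
  simp [widths]

lemma eight_mul_nine_pow_le_rpow {n : ℕ} (hn : 0 < n) :
    (8 : ℝ) * 9 ^ n ≤ 3 ^ (4 * (n : ℝ)) := by
  have h9 : (9 : ℝ) ≤ 9 ^ n := by
    simpa using pow_le_pow_right₀ (by norm_num : (1 : ℝ) ≤ 9) hn
  rw [show 4 * (n : ℝ) = ((4 * n : ℕ) : ℝ) by push_cast; ring, Real.rpow_natCast, pow_mul]
  calc (8 : ℝ) * 9 ^ n ≤ 9 ^ n * 9 ^ n := by nlinarith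
    _ = (3 ^ 4) ^ n := by rw [← mul_pow]; norm_num

end BitDecoder

/-- Bit decoding of ternary expansions with ReLU networks. -/
theorem bit_decoding :
    ∃ c : ℝ, 0 < c ∧
      ∀ n ℓ : ℕ, 0 < n → 0 < ℓ →
        ∃ φ : (Fin 1 → ℝ) → Fin 2 → ℝ,
          IsReLUNet 1 2 (c * (3 : ℝ) ^ n) (c * (⌈(ℓ : ℝ) / (n : ℝ)⌉₊ : ℝ))
            ((3 : ℝ) ^ (c * (n : ℝ))) φ ∧
          ∀ θ : ℕ → ℕ, (∀ k, θ k ≤ 1) →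
            φ (fun _ => ∑' k : ℕ, (θ k : ℝ) / 3 ^ (k + 1)) 0
                = (∑ j ∈ Finset.range ℓ, (θ j : ℝ) / 2 ^ (j + 1)) ∧
            φ (fun _ => ∑' k : ℕ, (θ k : ℝ) / 3 ^ (k + 1)) 1
                = ∑' k : ℕ, (θ (ℓ + k) : ℝ) / 3 ^ (k + 1) := by
  refine ⟨4, by norm_num, fun n ℓ hn _ =>
    ⟨BitDecoder.decoder n ℓ, ?_, fun θ hθ => ?_⟩⟩
  · have h3 : (1 : ℝ) ≤ 3 ^ n := one_le_pow₀ (by norm_num)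
    exact (BitDecoder.isReLUNet_decoder n ℓ).mono (by linarith)
      (le_mul_of_one_le_left (Nat.cast_nonneg _) (by norm_num))
      (BitDecoder.eight_mul_nine_pow_le_rpow hn)
  · simpa [BitDecoder.ternaryTail, BitDecoder.binarySum] using BitDecoder.decoder_apply hn hθ

end DeepRelu
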